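/- arXiv:1206.6498 — 9 statements merged into one kernel-verified Lean document; each statement's English description precedes it below -/
import Mathlib

section
/- Let q, z, c ∈ ℂ with q ≠ 0, q⁴ ≠ 1, z ≠ 0 and c ≠ z. Define the 2×2 matrices D = diag(q⁻², q²), M⁺(x) = (x − c)·E₂₁ and M⁻(x) = (x⁻¹ − c)·E₁₂. Then a 2×2 complex matrix K satisfies the three intertwining equations D·K = K·D, M⁺(1/z)·K = K·M⁺(z), and M⁻(1/z)·K = K·M⁻(z) if and only if K is a complex scalar multiple of diag(1, (cz−1)/(z(c−z))). -/
/-!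
Since `q⁻² ≠ q²`, commuting with `D` forces `K` to be diagonal, say `K = diag(a, b)`.
For diagonal `K` both `M⁺` and `M⁻` equations collapse to the single scalar relation
`(z − c)·b = (z⁻¹ − c)·a`, and as `z ≠ c` this says exactly `b = a·(cz − 1)/(z(c − z))`.
-/

open Matrix

/-- `diag(q⁻², q²)`, the image of the Cartan element `k₀k₁⁻¹`. -/
noncomputable def Dm (q : ℂ) : Matrix (Fin 2) (Fin 2) ℂ := !![(q ^ 2)⁻¹, 0; 0, q ^ 2]

/-- `M⁺(x) = (x − c)·E₂₁`. -/
noncomputable def Mp (c x : ℂ) : Matrix (Fin 2) (Fin 2) ℂ := (x - c) • !![0, 0; 1, 0]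

/-- `M⁻(x) = (x⁻¹ − c)·E₁₂`. -/
noncomputable def Mm (c x : ℂ) : Matrix (Fin 2) (Fin 2) ℂ := (x⁻¹ - c) • !![0, 1; 0, 0]

theorem Matrix.IsDiag.of_diagonal_mul_eq_mul_diagonal {n R : Type*} [Fintype n] [DecidableEq n]
    [CommRing R] [NoZeroDivisors R] {d : n → R} (hd : Function.Injective d)
    {K : Matrix n n R} (h : diagonal d * K = K * diagonal d) : K.IsDiag := by
  intro i j hij
  have hij' := congrFun (congrFun h i) j
  rw [diagonal_mul, mul_diagonal] at hij'
  have : (d i - d j) * K i j = 0 := by linear_combination hij'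
  exact (mul_eq_zero.mp this).resolve_left (sub_ne_zero.mpr (hd.ne hij))

theorem Matrix.IsDiag.eq_of_fin_two {R : Type*} [Zero R] {K : Matrix (Fin 2) (Fin 2) R}
    (h : K.IsDiag) : K = !![K 0 0, 0; 0, K 1 1] :=
  h.diagonal_diag.symm.trans (diagonal_fin_two _)

theorem inv_sq_ne_sq {K : Type*} [Field K] {q : K} (hq : q ≠ 0) (hq4 : q ^ 4 ≠ 1) :
    (q ^ 2)⁻¹ ≠ q ^ 2 := by
  intro h
  apply hq4
  rw [inv_eq_iff_eq_inv, ← one_div, eq_div_iff (pow_ne_zero 2 hq)] at h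
  linear_combination h

theorem sub_mul_eq_inv_sub_mul_iff {K : Type*} [Field K] {z c : K} (hz : z ≠ 0) (hc : c ≠ z)
    {a b : K} : (z - c) * b = (z⁻¹ - c) * a ↔ b = a * ((c * z - 1) / (z * (c - z))) := by
  have hzc : z - c ≠ 0 := sub_ne_zero.mpr hc.symm
  have : a * ((c * z - 1) / (z * (c - z))) = (z⁻¹ - c) * a / (z - c) := by
    field_simp
    ring
  rw [this, eq_div_iff hzc, mul_comm]

theorem Dm_mul_eq_mul_Dm_iff {q : ℂ} (hq : q ≠ 0) (hq4 : q ^ 4 ≠ 1)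
    {K : Matrix (Fin 2) (Fin 2) ℂ} :
    Dm q * K = K * Dm q ↔ ∃ a b : ℂ, K = !![a, 0; 0, b] := by
  rw [Dm, ← diagonal_vec2]
  constructor
  · intro h
    have hd : Function.Injective ![(q ^ 2)⁻¹, q ^ 2] := by
      have hne := inv_sq_ne_sq hq hq4
      intro i j hij
      fin_cases i <;> fin_cases j <;> simp_all [hne.symm]
    exact ⟨_, _, (IsDiag.of_diagonal_mul_eq_mul_diagonal hd h).eq_of_fin_two⟩
  · rintro ⟨a, b, rfl⟩
    rw [← diagonal_vec2]
    exact commute_diagonal _ _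

theorem Mp_mul_eq_mul_Mp_iff (c x y a b : ℂ) :
    Mp c x * !![a, 0; 0, b] = !![a, 0; 0, b] * Mp c y ↔ (x - c) * a = (y - c) * b := by
  simp only [Mp, ← Matrix.ext_iff, Fin.forall_fin_two]
  simp [mul_comm]

theorem Mm_mul_eq_mul_Mm_iff (c x y a b : ℂ) :
    Mm c x * !![a, 0; 0, b] = !![a, 0; 0, b] * Mm c y ↔ (x⁻¹ - c) * b = (y⁻¹ - c) * a := by
  simp only [Mm, ← Matrix.ext_iff, Fin.forall_fin_two]
  simp [mul_comm]

/-- A 2×2 matrix intertwines the generators of the singlet-boundary coideal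
subalgebra of `U_q(sl2hat)` iff it is a scalar multiple of
`diag(1, (cz−1)/(z(c−z)))`. -/
theorem stmt3 (q z c : ℂ) (hq : q ≠ 0) (hq4 : q ^ 4 ≠ 1) (hz : z ≠ 0) (hc : c ≠ z)
    (K : Matrix (Fin 2) (Fin 2) ℂ) :
    (Dm q * K = K * Dm q ∧ Mp c (1 / z) * K = K * Mp c z ∧
        Mm c (1 / z) * K = K * Mm c z) ↔
      ∃ lam : ℂ, K = lam • !![1, 0; 0, (c * z - 1) / (z * (c - z))] := by
  have scalar_rel (a b : ℂ) :
      (1 / z - c) * a = (z - c) * b ↔ b = a * ((c * z - 1) / (z * (c - z))) := by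
    rw [eq_comm, one_div, sub_mul_eq_inv_sub_mul_iff hz hc]
  have diag_smul (lam r : ℂ) : lam • !![1, 0; 0, r] = !![lam, 0; 0, lam * r] := by
    simp
  constructor
  · rintro ⟨hD, hMp, -⟩
    obtain ⟨a, b, rfl⟩ := (Dm_mul_eq_mul_Dm_iff hq hq4).1 hD
    rw [Mp_mul_eq_mul_Mp_iff, scalar_rel] at hMp
    exact ⟨a, by rw [diag_smul, hMp]⟩
  · rintro ⟨lam, rfl⟩
    rw [diag_smul, Dm_mul_eq_mul_Dm_iff hq hq4, Mp_mul_eq_mul_Mp_iff, scalar_rel,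
      Mm_mul_eq_mul_Mm_iff, one_div, inv_inv, sub_mul_eq_inv_sub_mul_iff hz hc]
    exact ⟨⟨_, _, rfl⟩, rfl, rfl⟩
end

section
/- Let q ∈ ℂ with q ≠ 0 and q⁴ ≠ 1. A 4×4 complex matrix K commutes with all three matrices diag(q², 1, 1, q⁻²), q·E₁₂ + E₁₃ + E₂₄ + q⁻¹·E₃₄, and E₂₁ + q⁻¹·E₃₁ + q·E₄₂ + E₄₃ if and only if K = a·I₄ + k·(−q⁻¹·E₂₂ + E₂₃ + E₃₂ − q·E₃₃) for some a, k ∈ ℂ. -/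
/-!
`Δ(k₁)` acts diagonally with eigenvalues `q², 1, 1, q⁻²`, which are distinct apart from the middle
pair because `q⁴ ≠ 1`; so `K` preserves its eigenspaces and is block diagonal with blocks of sizes
`1, 2, 1`. Commuting with `Δ(ξ₁⁺)` then imposes four linear equations on the six remaining
entries; since `q² + 1 ≠ 0` they leave exactly the two parameters `K₀₀` and `K₁₂`. Conversely,
scalars and the matrix `boundaryMatrix q` commute with all three generators by direct computation.
-/

open Matrix

theorem Matrix.apply_eq_zero_of_commute_diagonal {n R : Type*} [Fintype n] [DecidableEq n]
    [CommRing R] [NoZeroDivisors R] {K : Matrix n n R} {d : n → R}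
    (h : Commute K (diagonal d)) {i j : n} (hij : d i ≠ d j) : K i j = 0 := by
  have hij' : K i j * d j = d i * K i j := by
    simpa only [mul_diagonal, diagonal_mul] using congrFun (congrFun h i) j
  have : K i j * (d j - d i) = 0 := by linear_combination hij'
  exact (mul_eq_zero.1 this).resolve_right (sub_ne_zero.2 hij.symm)

namespace UqSl2Boundary

variable {F : Type*} [Field F] (q : F)

noncomputable section

/- Images of `Δ(k₁)`, `Δ(ξ₁⁺)`, `Δ(ξ₁⁻)` under `T_z ⊗ T_s` in the basis
`v₁⊗w₁, v₁⊗w₂, v₂⊗w₁, v₂⊗w₂`. -/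

def cartan : Matrix (Fin 4) (Fin 4) F :=
  !![q ^ 2, 0, 0, 0; 0, 1, 0, 0; 0, 0, 1, 0; 0, 0, 0, (q ^ 2)⁻¹]

def raising : Matrix (Fin 4) (Fin 4) F :=
  !![0, q, 1, 0; 0, 0, 0, 1; 0, 0, 0, q⁻¹; 0, 0, 0, 0]

def lowering : Matrix (Fin 4) (Fin 4) F :=
  !![0, 0, 0, 0; 1, 0, 0, 0; q⁻¹, 0, 0, 0; 0, q, 1, 0]

def boundaryMatrix : Matrix (Fin 4) (Fin 4) F :=
  !![0, 0, 0, 0; 0, -q⁻¹, 1, 0; 0, 1, -q, 0; 0, 0, 0, 0]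

theorem cartan_eq_diagonal : cartan q = diagonal ![q ^ 2, 1, 1, (q ^ 2)⁻¹] := by
  ext i j; fin_cases i <;> fin_cases j <;> rfl

end

variable {q}

theorem commute_boundaryMatrix_cartan : Commute (boundaryMatrix q) (cartan q) := by
  ext i j; fin_cases i <;> fin_cases j <;>
    simp [boundaryMatrix, cartan, mul_apply, Fin.sum_univ_four]

theorem commute_boundaryMatrix_raising (hq : q ≠ 0) : Commute (boundaryMatrix q) (raising q) := by
  ext i j; fin_cases i <;> fin_cases j <;>
    simp [boundaryMatrix, raising, mul_apply, Fin.sum_univ_four, hq]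

theorem commute_boundaryMatrix_lowering (hq : q ≠ 0) : Commute (boundaryMatrix q) (lowering q) := by
  ext i j; fin_cases i <;> fin_cases j <;>
    simp [boundaryMatrix, lowering, mul_apply, Fin.sum_univ_four, hq]

theorem eq_block_of_commute_cartan (hq : q ≠ 0) (hq4 : q ^ 4 ≠ 1) {K : Matrix (Fin 4) (Fin 4) F}
    (h : Commute K (cartan q)) :
    K = !![K 0 0, 0, 0, 0; 0, K 1 1, K 1 2, 0; 0, K 2 1, K 2 2, 0; 0, 0, 0, K 3 3] := by
  rw [cartan_eq_diagonal] at h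
  have h₁ : q ^ 2 ≠ 1 := fun h₁ => hq4 (by rw [show 4 = 2 * 2 from rfl, pow_mul, h₁, one_pow])
  have h₂ : (q ^ 2)⁻¹ ≠ 1 := inv_ne_one.2 h₁
  have h₃ : q ^ 2 ≠ (q ^ 2)⁻¹ := fun h₃ => hq4 <| by
    have := mul_inv_cancel₀ (pow_ne_zero 2 hq)
    rw [← h₃] at this
    linear_combination this
  ext i j
  fin_cases i <;> fin_cases j <;>
    first
    | rfl
    | exact apply_eq_zero_of_commute_diagonal h (by simp [h₁, h₂, h₃, h₁.symm, h₂.symm, h₃.symm])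

theorem block_eq_of_commute_raising (hq : q ≠ 0) (hq2 : q ^ 2 + 1 ≠ 0) {a b c d e f : F}
    (h : Commute !![a, 0, 0, 0; 0, b, c, 0; 0, d, e, 0; 0, 0, 0, f] (raising q)) :
    !![a, 0, 0, 0; 0, b, c, 0; 0, d, e, 0; 0, 0, 0, f] = a • 1 + c • boundaryMatrix q := by
  have entry (i j : Fin 4) := congrFun (congrFun h i) j
  have h01 : a * q = q * b + d := by simpa [raising, mul_apply, Fin.sum_univ_four] using entry 0 1
  have h02 : a = q * c + e := by simpa [raising, mul_apply, Fin.sum_univ_four] using entry 0 2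
  have h13 : b + c * q⁻¹ = f := by simpa [raising, mul_apply, Fin.sum_univ_four] using entry 1 3
  have h23 : d + e * q⁻¹ = q⁻¹ * f := by
    simpa [raising, mul_apply, Fin.sum_univ_four] using entry 2 3
  have hc : q * (a - b) = c := by
    refine mul_left_cancel₀ hq2 ?_
    field_simp at h13 h23
    linear_combination -h13 + q * h23 + q ^ 2 * h01 + q * h02
  have hb : b = a - c * q⁻¹ := by field_simp; linear_combination -hc
  have hd : d = c := by linear_combination -h01 + hc
  have he : e = a - c * q := by linear_combination -h02
  have hf : f = a := by rw [← h13, hb]; ring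
  subst hb hd he hf
  ext i j
  fin_cases i <;> fin_cases j <;> simp [boundaryMatrix, one_apply, sub_eq_add_neg]

theorem exists_eq_of_commute_cartan_raising (hq : q ≠ 0) (hq4 : q ^ 4 ≠ 1)
    {K : Matrix (Fin 4) (Fin 4) F} (h₁ : Commute K (cartan q)) (h₂ : Commute K (raising q)) :
    ∃ a k : F, K = a • 1 + k • boundaryMatrix q := by
  have hq2 : q ^ 2 + 1 ≠ 0 := fun h => hq4 (by linear_combination (q ^ 2 - 1) * h)
  rw [eq_block_of_commute_cartan hq hq4 h₁] at h₂ ⊢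
  exact ⟨_, _, block_eq_of_commute_raising hq hq2 h₂⟩

end UqSl2Boundary

open UqSl2Boundary

/-- A 4×4 matrix commutes with the represented coproducts of the Lie generators
`k₁, ξ₁⁺, ξ₁⁻` of `U_q(sl2hat)` iff it has the stated two-parameter form. -/
theorem stmt4 (q : ℂ) (hq : q ≠ 0) (hq4 : q ^ 4 ≠ 1)
    (K : Matrix (Fin 4) (Fin 4) ℂ) :
    (K * !![q ^ 2, 0, 0, 0; 0, 1, 0, 0; 0, 0, 1, 0; 0, 0, 0, (q ^ 2)⁻¹] =
        !![q ^ 2, 0, 0, 0; 0, 1, 0, 0; 0, 0, 1, 0; 0, 0, 0, (q ^ 2)⁻¹] * K ∧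
      K * !![0, q, 1, 0; 0, 0, 0, 1; 0, 0, 0, q⁻¹; 0, 0, 0, 0] =
        !![0, q, 1, 0; 0, 0, 0, 1; 0, 0, 0, q⁻¹; 0, 0, 0, 0] * K ∧
      K * !![0, 0, 0, 0; 1, 0, 0, 0; q⁻¹, 0, 0, 0; 0, q, 1, 0] =
        !![0, 0, 0, 0; 1, 0, 0, 0; q⁻¹, 0, 0, 0; 0, q, 1, 0] * K) ↔
      ∃ a k : ℂ, K = a • (1 : Matrix (Fin 4) (Fin 4) ℂ) +
        k • !![0, 0, 0, 0; 0, -q⁻¹, 1, 0; 0, 1, -q, 0; 0, 0, 0, 0] := by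
  change Commute K (cartan q) ∧ Commute K (raising q) ∧ Commute K (lowering q) ↔
    ∃ a k : ℂ, K = a • 1 + k • boundaryMatrix q
  constructor
  · rintro ⟨h₁, h₂, -⟩
    exact exists_eq_of_commute_cartan_raising hq hq4 h₁ h₂
  · rintro ⟨a, k, rfl⟩
    have commute_of (X : Matrix (Fin 4) (Fin 4) ℂ) (hX : Commute (boundaryMatrix q) X) :
        Commute (a • 1 + k • boundaryMatrix q) X :=
      ((Commute.one_left X).smul_left a).add_left (hX.smul_left k)
    exact ⟨commute_of _ commute_boundaryMatrix_cartan,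
      commute_of _ (commute_boundaryMatrix_raising hq),
      commute_of _ (commute_boundaryMatrix_lowering hq)⟩
end

section
/- Let q, z, s ∈ ℂ with q ≠ 0, q⁴ ≠ 1, z ≠ 0, s ≠ 0, and D := q⁻² − (s + s⁻¹)z + q²z² ≠ 0. Define the 4×4 matrix M(x) = M₂₁(x)·E₂₁ + M₃₁(x)·E₃₁ + M₄₂(x)·E₄₂ + M₄₃(x)·E₄₃ with M₂₁(x) = q⁻³(s + s⁻¹ + (1 − q⁻²)x⁻¹), M₃₁(x) = q⁻²x + q⁻⁴x⁻¹, M₄₂(x) = q⁻²x + x⁻¹, and M₄₃(x) = q⁻¹(s + s⁻¹) − (q − q⁻¹)x⁻¹. Then for k ∈ ℂ the matrix K = I₄ + k·(−q⁻¹·E₂₂ + E₂₃ + E₃₂ − q·E₃₃) satisfies M(1/z)·K = K·M(z) if and only if k = (q − q⁻¹)(z² − 1)/D. -/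
/-!
Write `K = 1 + k • N` with `N = kMatrixGen q`. Both `M(z⁻¹) - M(z)` and `M(z⁻¹) N - N M(z)`
turn out to be multiples of one fixed nonzero matrix `P = intertwinerDefect q`, with coefficients
`z⁻¹ (q - q⁻¹) (z² - 1)` and `-z⁻¹ D`. Hence
`M(z⁻¹) K - K M(z) = z⁻¹ ((q - q⁻¹) (z² - 1) - k D) • P`, which vanishes exactly when
`k D = (q - q⁻¹) (z² - 1)`.
-/

open Matrix

/-- The represented coproduct of the twisted affine generator `B₀⁺` of the
vector-boundary coideal subalgebra of `U_q(sl2hat)`. -/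
noncomputable def Mtw (q s x : ℂ) : Matrix (Fin 4) (Fin 4) ℂ :=
  !![0, 0, 0, 0;
     (q ^ 3)⁻¹ * (s + s⁻¹ + (1 - (q ^ 2)⁻¹) * x⁻¹), 0, 0, 0;
     (q ^ 2)⁻¹ * x + (q ^ 4)⁻¹ * x⁻¹, 0, 0, 0;
     0, (q ^ 2)⁻¹ * x + x⁻¹, q⁻¹ * (s + s⁻¹) - (q - q⁻¹) * x⁻¹, 0]

noncomputable def kMatrixGen (q : ℂ) : Matrix (Fin 4) (Fin 4) ℂ :=
  !![0, 0, 0, 0; 0, -q⁻¹, 1, 0; 0, 1, -q, 0; 0, 0, 0, 0]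

noncomputable def intertwinerDefect (q : ℂ) : Matrix (Fin 4) (Fin 4) ℂ :=
  !![0, 0, 0, 0; (q ^ 4)⁻¹, 0, 0, 0; -(q ^ 3)⁻¹, 0, 0, 0; 0, q⁻¹, -1, 0]

lemma intertwinerDefect_ne_zero (q : ℂ) : intertwinerDefect q ≠ 0 := fun h => by
  simpa [intertwinerDefect] using congrFun (congrFun h 3) 2

section

variable {q z : ℂ} (s : ℂ)

lemma Mtw_inv_sub_Mtw (hq : q ≠ 0) (hz : z ≠ 0) :
    Mtw q s z⁻¹ - Mtw q s z = (z⁻¹ * (q - q⁻¹) * (z ^ 2 - 1)) • intertwinerDefect q := by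
  ext i j
  fin_cases i <;> fin_cases j <;> simp [Mtw, intertwinerDefect] <;> field_simp <;> ring

lemma Mtw_inv_mul_kMatrixGen_sub_kMatrixGen_mul_Mtw (hq : q ≠ 0) (hz : z ≠ 0) :
    Mtw q s z⁻¹ * kMatrixGen q - kMatrixGen q * Mtw q s z =
      -(z⁻¹ * ((q ^ 2)⁻¹ - (s + s⁻¹) * z + q ^ 2 * z ^ 2)) • intertwinerDefect q := by
  ext i j
  simp only [Matrix.sub_apply, Matrix.smul_apply, mul_apply, Fin.sum_univ_four, smul_eq_mul]
  unfold Mtw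
  generalize s + s⁻¹ = c
  fin_cases i <;> fin_cases j <;> simp [kMatrixGen, intertwinerDefect] <;> field_simp <;> ring

lemma Mtw_inv_mul_sub_mul_Mtw (k : ℂ) (hq : q ≠ 0) (hz : z ≠ 0) :
    Mtw q s z⁻¹ * (1 + k • kMatrixGen q) - (1 + k • kMatrixGen q) * Mtw q s z =
      (z⁻¹ * ((q - q⁻¹) * (z ^ 2 - 1) - k * ((q ^ 2)⁻¹ - (s + s⁻¹) * z + q ^ 2 * z ^ 2))) •
        intertwinerDefect q := by
  calc Mtw q s z⁻¹ * (1 + k • kMatrixGen q) - (1 + k • kMatrixGen q) * Mtw q s z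
      = (Mtw q s z⁻¹ - Mtw q s z) +
          k • (Mtw q s z⁻¹ * kMatrixGen q - kMatrixGen q * Mtw q s z) := by
        simp only [mul_add, add_mul, mul_one, one_mul, mul_smul_comm, smul_mul_assoc, smul_sub]
        abel
    _ = _ := by
        rw [Mtw_inv_sub_Mtw s hq hz, Mtw_inv_mul_kMatrixGen_sub_kMatrixGen_mul_Mtw s hq hz,
          smul_smul, ← add_smul]
        congr 1
        ring

end

theorem stmt5_general (q z s k : ℂ) (hq : q ≠ 0) (hz : z ≠ 0)
    (hD : (q ^ 2)⁻¹ - (s + s⁻¹) * z + q ^ 2 * z ^ 2 ≠ 0) :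
    Mtw q s (1 / z) *
        (1 + k • !![0, 0, 0, 0; 0, -q⁻¹, 1, 0; 0, 1, -q, 0; 0, 0, 0, 0]) =
      (1 + k • !![0, 0, 0, 0; 0, -q⁻¹, 1, 0; 0, 1, -q, 0; 0, 0, 0, 0]) *
        Mtw q s z ↔
      k = (q - q⁻¹) * (z ^ 2 - 1) /
        ((q ^ 2)⁻¹ - (s + s⁻¹) * z + q ^ 2 * z ^ 2) := by
  rw [← sub_eq_zero, one_div, ← kMatrixGen, Mtw_inv_mul_sub_mul_Mtw s k hq hz, smul_eq_zero,
    or_iff_left (intertwinerDefect_ne_zero q), mul_eq_zero, or_iff_right (inv_ne_zero hz),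
    sub_eq_zero, eq_div_iff hD, eq_comm]

/-- The K-matrix `I₄ + k·(−q⁻¹E₂₂ + E₂₃ + E₃₂ − qE₃₃)` intertwines the twisted
affine generator iff `k = (q−q⁻¹)(z²−1)/D`. -/
theorem stmt5 (q z s k : ℂ) (hq : q ≠ 0) (hq4 : q ^ 4 ≠ 1) (hz : z ≠ 0) (hs : s ≠ 0)
    (hD : (q ^ 2)⁻¹ - (s + s⁻¹) * z + q ^ 2 * z ^ 2 ≠ 0) :
    Mtw q s (1 / z) *
        (1 + k • !![0, 0, 0, 0; 0, -q⁻¹, 1, 0; 0, 1, -q, 0; 0, 0, 0, 0]) =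
      (1 + k • !![0, 0, 0, 0; 0, -q⁻¹, 1, 0; 0, 1, -q, 0; 0, 0, 0, 0]) *
        Mtw q s z ↔
      k = (q - q⁻¹) * (z ^ 2 - 1) /
        ((q ^ 2)⁻¹ - (s + s⁻¹) * z + q ^ 2 * z ^ 2) :=
  stmt5_general q z s k hq hz hD
end

section
/- Let u, v, a, b, c ∈ ℂ with c ≠ u, c ≠ v, u − v ≠ 1 and u + v ≠ 1. Define R(x) = [[1,0,0,0],[0,r(x),1−r(x),0],[0,1−r(x),r(x),0],[0,0,0,1]] with r(x) = x/(x−1), and for x ∈ {u, v} define K(x) = [[1, a·x/(c−x)],[b·x/(c−x), (c+x)/(c−x)]]. Then the rational reflection equation for a singlet boundary holds: R(u−v)·(K(u)⊗I₂)·R(u+v)·(I₂⊗K(v)) = (I₂⊗K(v))·R(u+v)·(K(u)⊗I₂)·R(u−v) as 4×4 complex matrices. -/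
open Matrix

def div2 (i : Fin 4) : Fin 2 := ⟨i.val / 2, by have := i.isLt; omega⟩
def mod2 (i : Fin 4) : Fin 2 := ⟨i.val % 2, by have := i.isLt; omega⟩

/-- Kronecker product of two 2×2 matrices, with lexicographic ordering of basis. -/
noncomputable def kron2 (A B : Matrix (Fin 2) (Fin 2) ℂ) : Matrix (Fin 4) (Fin 4) ℂ :=
  Matrix.of fun i j => A (div2 i) (div2 j) * B (mod2 i) (mod2 j)

/-- Rational R-matrix of the Yangian `Y(sl2)`. -/
noncomputable def Rr (x : ℂ) : Matrix (Fin 4) (Fin 4) ℂ :=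
  let r : ℂ := x / (x - 1)
  !![1, 0, 0, 0;
     0, r, 1 - r, 0;
     0, 1 - r, r, 0;
     0, 0, 0, 1]

/-- General singlet-boundary reflection matrix for `Y(sl2)`. -/
noncomputable def Kr (a b c x : ℂ) : Matrix (Fin 2) (Fin 2) ℂ :=
  !![1, a * (x / (c - x));
     b * (x / (c - x)), (c + x) / (c - x)]

/-! Clearing denominators, `R(x) = (x - 1)⁻¹ (x - P)` with `P` the flip of `ℂ² ⊗ ℂ²`, and
`K(x) = (c - x)⁻¹ (c + x M)` with `M = [[-1, a], [b, 1]]`. The scalar factors commute with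
everything, so it suffices to check the reflection equation for `x - P` and `c + x M`; it holds for
every traceless `M` (then `M²` is scalar), which is verified entrywise. -/

def tensorFlip : Matrix (Fin 4) (Fin 4) ℂ :=
  !![1, 0, 0, 0;
     0, 0, 1, 0;
     0, 1, 0, 0;
     0, 0, 0, 1]

def yangR (x : ℂ) : Matrix (Fin 4) (Fin 4) ℂ := x • 1 - tensorFlip

lemma kron2_smul_left (r : ℂ) (A B : Matrix (Fin 2) (Fin 2) ℂ) :
    kron2 (r • A) B = r • kron2 A B := by
  ext i j
  simp [kron2, mul_assoc]

lemma kron2_smul_right (r : ℂ) (A B : Matrix (Fin 2) (Fin 2) ℂ) :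
    kron2 A (r • B) = r • kron2 A B := by
  ext i j
  simp [kron2, mul_left_comm]

lemma Rr_eq_smul_yangR {x : ℂ} (hx : x - 1 ≠ 0) : Rr x = (x - 1)⁻¹ • yangR x := by
  ext i j
  fin_cases i <;> fin_cases j <;> simp [Rr, yangR, tensorFlip] <;> field_simp <;> ring

lemma Kr_eq_smul (a b : ℂ) {c x : ℂ} (h : c - x ≠ 0) :
    Kr a b c x = (c - x)⁻¹ • (c • 1 + x • !![-1, a; b, 1]) := by
  ext i j
  fin_cases i <;> fin_cases j <;> simp [Kr, ← sub_eq_add_neg] <;> field_simp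

theorem yangR_reflection_equation_of_trace_eq_zero {M : Matrix (Fin 2) (Fin 2) ℂ}
    (hM : M.trace = 0) (c u v : ℂ) :
    yangR (u - v) * kron2 (c • 1 + u • M) 1 * yangR (u + v) * kron2 1 (c • 1 + v • M) =
      kron2 1 (c • 1 + v • M) * yangR (u + v) * kron2 (c • 1 + u • M) 1 * yangR (u - v) := by
  rw [Matrix.trace_fin_two, add_eq_zero_iff_eq_neg] at hM
  ext i j
  fin_cases i <;> fin_cases j <;>
    simp [yangR, Matrix.mul_apply, Fin.sum_univ_four, kron2, tensorFlip, div2, mod2,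
      Matrix.one_apply, hM] <;> ring

/-- The general singlet-boundary K-matrix satisfies the rational reflection
equation. -/
theorem stmt7 (u v a b c : ℂ) (hcu : c ≠ u) (hcv : c ≠ v)
    (h1 : u - v ≠ 1) (h2 : u + v ≠ 1) :
    Rr (u - v) * kron2 (Kr a b c u) 1 * Rr (u + v) * kron2 1 (Kr a b c v) =
      kron2 1 (Kr a b c v) * Rr (u + v) * kron2 (Kr a b c u) 1 * Rr (u - v) := by
  have hM : (!![-1, a; b, 1] : Matrix (Fin 2) (Fin 2) ℂ).trace = 0 := by
    simp [Matrix.trace_fin_two]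
  rw [Rr_eq_smul_yangR (sub_ne_zero.mpr h1), Rr_eq_smul_yangR (sub_ne_zero.mpr h2),
    Kr_eq_smul a b (sub_ne_zero.mpr hcu), Kr_eq_smul a b (sub_ne_zero.mpr hcv)]
  simp only [kron2_smul_left, kron2_smul_right, Matrix.smul_mul, Matrix.mul_smul, smul_smul,
    yangR_reflection_equation_of_trace_eq_zero hM]
  congr 1
  ring
end

section
/- Let u, v, c ∈ ℂ with u − v ≠ 1, u + v ≠ 1, c² ≠ (u−1)² and c² ≠ (v−1)². Define R(x) = [[1,0,0,0],[0,r(x),1−r(x),0],[0,1−r(x),r(x),0],[0,0,0,1]] with r(x) = x/(x−1), and for x ∈ {u, v} define K(x) = I₄ + k(x)·(−E₂₂ + E₂₃ + E₃₂ − E₃₃) where k(x) = 2x/(c² − (x−1)²). Then the rational reflection equation for a vector boundary holds on ℂ²⊗ℂ²⊗ℂ²: R₁₂(u−v)·K₁₃(u)·R₁₂(u+v)·K₂₃(v) = K₂₃(v)·R₁₂(u+v)·K₁₃(u)·R₁₂(u−v) as 8×8 complex matrices. -/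
open Matrix

/-- Lexicographic pairing of two `Fin 2` indices into a `Fin 4` index. -/
def pair2 (a b : Fin 2) : Fin 4 :=
  ⟨2 * a.val + b.val, by have := a.isLt; have := b.isLt; omega⟩

/-- `A₁₂ = A ⊗ I₂`: action of a 4×4 matrix on factors 1,2 of ℂ²⊗ℂ²⊗ℂ². -/
noncomputable def op12 (A : Matrix (Fin 4) (Fin 4) ℂ) :
    Matrix (Fin 2 × Fin 2 × Fin 2) (Fin 2 × Fin 2 × Fin 2) ℂ :=
  Matrix.of fun i j =>
    A (pair2 i.1 i.2.1) (pair2 j.1 j.2.1) * (if i.2.2 = j.2.2 then 1 else 0)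

/-- `A₂₃ = I₂ ⊗ A`: action of a 4×4 matrix on factors 2,3 of ℂ²⊗ℂ²⊗ℂ². -/
noncomputable def op23 (A : Matrix (Fin 4) (Fin 4) ℂ) :
    Matrix (Fin 2 × Fin 2 × Fin 2) (Fin 2 × Fin 2 × Fin 2) ℂ :=
  Matrix.of fun i j =>
    (if i.1 = j.1 then (1 : ℂ) else 0) * A (pair2 i.2.1 i.2.2) (pair2 j.2.1 j.2.2)

/-- The 4×4 permutation matrix `P` with `P (x ⊗ y) = y ⊗ x`. -/
noncomputable def P4 : Matrix (Fin 4) (Fin 4) ℂ :=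
  !![1, 0, 0, 0; 0, 0, 1, 0; 0, 1, 0, 0; 0, 0, 0, 1]

/-- `A₁₃ = (P⊗I₂)(I₂⊗A)(P⊗I₂)`: action of a 4×4 matrix on factors 1,3. -/
noncomputable def op13 (A : Matrix (Fin 4) (Fin 4) ℂ) :
    Matrix (Fin 2 × Fin 2 × Fin 2) (Fin 2 × Fin 2 × Fin 2) ℂ :=
  op12 P4 * op23 A * op12 P4

/-- Vector-boundary reflection matrix for `Y(sl2)`. -/
noncomputable def Krv (c x : ℂ) : Matrix (Fin 4) (Fin 4) ℂ :=
  1 + (2 * x / (c ^ 2 - (x - 1) ^ 2)) •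
    !![0, 0, 0, 0; 0, -1, 1, 0; 0, 1, -1, 0; 0, 0, 0, 0]

/-!
Both `R(x)` and `K(x)` have the form `α + β P`, and `P₁₃ = P₁₂ P₂₃ P₁₂`, so the two sides of the
reflection equation are images of elements of the group algebra of `S₃`, generated by the flips
`s = P₁₂` and `r = P₂₃`. The two sides are exchanged by the anti-involution `g ↦ g⁻¹`, hence they
agree as soon as the two 3-cycles `sr` and `rs` carry the same coefficient on the left. That is a
single polynomial identity in the parameters, which for the rational `R` and the vector-boundary
`K` reduces, after clearing denominators, to `(u² - v²) + (c² - u² - 1) - (c² - v² - 1) = 0`.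
-/

section CoxeterS3

variable {K A : Type*} [CommRing K] [Ring A] [Algebra K A] {s r : A}

/-- `h` says that the 3-cycles `s * r` and `r * s` have equal coefficients in the left side. -/
theorem reflection_equation_of_coxeter (hs : s * s = 1) (hr : r * r = 1)
    (hsr : s * r * s = r * s * r) (x₀ x₁ a₀ a₁ y₀ y₁ g₀ g₁ : K)
    (h : a₁ * g₁ * x₀ * y₀ + a₁ * g₀ * x₁ * y₀ =
      a₀ * g₁ * (x₀ * y₁ + x₁ * y₀) + a₁ * g₀ * x₀ * y₁) :
    (x₀ • 1 + x₁ • s) * (a₀ • 1 + a₁ • (s * r * s)) * (y₀ • 1 + y₁ • s) * (g₀ • 1 + g₁ • r) =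
      (g₀ • 1 + g₁ • r) * (y₀ • 1 + y₁ • s) * (a₀ • 1 + a₁ • (s * r * s)) *
        (x₀ • 1 + x₁ • s) := by
  have hs' (w : A) : s * (s * w) = w := by rw [← mul_assoc, hs, one_mul]
  have hr' (w : A) : r * (r * w) = w := by rw [← mul_assoc, hr, one_mul]
  have hrsr : r * (s * r) = s * (r * s) := by simp only [← mul_assoc, hsr]
  have hrsr' (w : A) : r * (s * (r * w)) = s * (r * (s * w)) := by
    simp only [← mul_assoc, hsr]
  -- `ss → 1`, `rr → 1`, `rsr → srs` is confluent: both sides become combinations of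
  -- `1, s, r, sr, rs, srs`.
  simp only [add_mul, mul_add, smul_mul_assoc, mul_smul_comm, one_mul, mul_one, mul_assoc,
    hs, hr, hs', hr', hrsr, hrsr']
  linear_combination (norm := module) h • (r * s - s * r)

end CoxeterS3

lemma Rr_eq_smul_one_add_smul (x : ℂ) :
    Rr x = (x / (x - 1)) • 1 + (1 - x / (x - 1)) • P4 := by
  ext i j
  fin_cases i <;> fin_cases j <;> simp [Rr, P4]

lemma Krv_eq_smul_one_add_smul (c x : ℂ) :
    Krv c x = (1 - 2 * x / (c ^ 2 - (x - 1) ^ 2)) • 1 + (2 * x / (c ^ 2 - (x - 1) ^ 2)) • P4 := by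
  ext i j
  fin_cases i <;> fin_cases j <;> simp [Krv, P4] <;> ring

section TensorLegs

open scoped Kronecker

noncomputable def tensorIndex12 : Fin 2 × Fin 2 × Fin 2 ≃ Fin 4 × Fin 2 :=
  Equiv.ofBijective (fun i => (pair2 i.1 i.2.1, i.2.2)) (by decide)

noncomputable def tensorIndex23 : Fin 2 × Fin 2 × Fin 2 ≃ Fin 2 × Fin 4 :=
  Equiv.ofBijective (fun i => (i.1, pair2 i.2.1 i.2.2)) (by decide)

lemma op12_eq_submatrix_kronecker (A : Matrix (Fin 4) (Fin 4) ℂ) :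
    op12 A = (A ⊗ₖ (1 : Matrix (Fin 2) (Fin 2) ℂ)).submatrix tensorIndex12 tensorIndex12 := by
  ext i j
  simp [op12, tensorIndex12, Matrix.one_apply]

lemma op23_eq_submatrix_kronecker (A : Matrix (Fin 4) (Fin 4) ℂ) :
    op23 A = ((1 : Matrix (Fin 2) (Fin 2) ℂ) ⊗ₖ A).submatrix tensorIndex23 tensorIndex23 := by
  ext i j
  simp [op23, tensorIndex23, Matrix.one_apply]

lemma op12_smul_one_add_smul (a b : ℂ) (A : Matrix (Fin 4) (Fin 4) ℂ) :
    op12 (a • 1 + b • A) = a • 1 + b • op12 A := by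
  simp only [op12_eq_submatrix_kronecker, Matrix.add_kronecker, Matrix.smul_kronecker,
    Matrix.one_kronecker_one, Matrix.submatrix_add, Matrix.submatrix_smul, Pi.add_apply,
    Pi.smul_apply, Matrix.submatrix_one_equiv]

lemma op23_smul_one_add_smul (a b : ℂ) (A : Matrix (Fin 4) (Fin 4) ℂ) :
    op23 (a • 1 + b • A) = a • 1 + b • op23 A := by
  simp only [op23_eq_submatrix_kronecker, Matrix.kronecker_add, Matrix.kronecker_smul,
    Matrix.one_kronecker_one, Matrix.submatrix_add, Matrix.submatrix_smul, Pi.add_apply,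
    Pi.smul_apply, Matrix.submatrix_one_equiv]

end TensorLegs

def swap12 : Equiv.Perm (Fin 2 × Fin 2 × Fin 2) :=
  ⟨fun i => (i.2.1, i.1, i.2.2), fun i => (i.2.1, i.1, i.2.2), fun _ => rfl, fun _ => rfl⟩

def swap23 : Equiv.Perm (Fin 2 × Fin 2 × Fin 2) :=
  ⟨fun i => (i.1, i.2.2, i.2.1), fun i => (i.1, i.2.2, i.2.1), fun _ => rfl, fun _ => rfl⟩

lemma op12_P4 : op12 P4 = swap12.permMatrix ℂ := by
  ext ⟨a, b, e⟩ ⟨d, g, f⟩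
  fin_cases a <;> fin_cases b <;> fin_cases e <;> fin_cases d <;> fin_cases g <;> fin_cases f <;>
    simp [op12, P4, pair2, PEquiv.toMatrix_apply, swap12]

lemma op23_P4 : op23 P4 = swap23.permMatrix ℂ := by
  ext ⟨a, b, e⟩ ⟨d, g, f⟩
  fin_cases a <;> fin_cases b <;> fin_cases e <;> fin_cases d <;> fin_cases g <;> fin_cases f <;>
    simp [op23, P4, pair2, PEquiv.toMatrix_apply, swap23]

lemma op12_P4_mul_self : op12 P4 * op12 P4 = 1 := by
  rw [op12_P4, ← Matrix.permMatrix_mul, ← Matrix.permMatrix_one]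
  rfl

lemma op23_P4_mul_self : op23 P4 * op23 P4 = 1 := by
  rw [op23_P4, ← Matrix.permMatrix_mul, ← Matrix.permMatrix_one]
  rfl

lemma op12_P4_mul_op23_P4_mul_op12_P4 :
    op12 P4 * op23 P4 * op12 P4 = op23 P4 * op12 P4 * op23 P4 := by
  simp only [op12_P4, op23_P4, ← Matrix.permMatrix_mul]
  rfl

lemma op13_smul_one_add_smul (a b : ℂ) :
    op13 (a • 1 + b • P4) = a • 1 + b • (op12 P4 * op23 P4 * op12 P4) := by
  rw [op13, op23_smul_one_add_smul]
  simp only [mul_add, add_mul, smul_mul_assoc, mul_smul_comm, mul_one, op12_P4_mul_self]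

/-- The vector-boundary K-matrix of `Y(sl2)` satisfies the rational reflection
equation. -/
theorem stmt8 (u v c : ℂ) (h1 : u - v ≠ 1) (h2 : u + v ≠ 1)
    (hu : c ^ 2 ≠ (u - 1) ^ 2) (hv : c ^ 2 ≠ (v - 1) ^ 2) :
    op12 (Rr (u - v)) * op13 (Krv c u) * op12 (Rr (u + v)) * op23 (Krv c v) =
      op23 (Krv c v) * op12 (Rr (u + v)) * op13 (Krv c u) *
        op12 (Rr (u - v)) := by
  simp only [Rr_eq_smul_one_add_smul, Krv_eq_smul_one_add_smul, op12_smul_one_add_smul,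
    op13_smul_one_add_smul, op23_smul_one_add_smul]
  apply reflection_equation_of_coxeter op12_P4_mul_self op23_P4_mul_self
    op12_P4_mul_op23_P4_mul_op12_P4
  have h1' : u - v - 1 ≠ 0 := sub_ne_zero.mpr h1
  have h2' : u + v - 1 ≠ 0 := sub_ne_zero.mpr h2
  have hu' : c ^ 2 - (u - 1) ^ 2 ≠ 0 := sub_ne_zero.mpr hu
  have hv' : c ^ 2 - (v - 1) ^ 2 ≠ 0 := sub_ne_zero.mpr hv
  field_simp
  ring
end

section
/- Let u, t ∈ ℂ with t ≠ u. Define the 2×2 matrices H = diag(1, −1), M⁺(x) = (x + t)·E₁₂ and M⁻(x) = (x − t)·E₂₁. Then a 2×2 complex matrix K satisfies H·K = K·H, M⁺(−u)·K = K·M⁺(u), and M⁻(−u)·K = K·M⁻(u) if and only if K is a complex scalar multiple of diag(1, (t+u)/(t−u)). -/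
/-!
Entrywise, each relation `M^±(−u) K = K M^±(u)` says that `(t − u) K₁₁ = (t + u) K₀₀` and that
one off-diagonal entry of `K` is killed by both `t − u` and `t + u`. Since `t ≠ u`, `K` is diagonal
with `K₁₁ = (t + u)/(t − u) · K₀₀`, and conversely such a diagonal `K` commutes with `H`.
-/

open Matrix

/-- The represented Cartan generator `H = diag(1, −1)`. -/
noncomputable def Hm : Matrix (Fin 2) (Fin 2) ℂ := !![1, 0; 0, -1]

/-- `M⁺(x) = (x + t)·E₁₂`, the represented twisted Yangian generator `Ẽ⁺`. -/
noncomputable def Mpy (t x : ℂ) : Matrix (Fin 2) (Fin 2) ℂ := (x + t) • !![0, 1; 0, 0]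

/-- `M⁻(x) = (x − t)·E₂₁`, the represented twisted Yangian generator `Ẽ⁻`. -/
noncomputable def Mmy (t x : ℂ) : Matrix (Fin 2) (Fin 2) ℂ := (x - t) • !![0, 0; 1, 0]

theorem exists_eq_smul_diag_one_iff {R : Type*} [CommRing R] (r : R)
    (K : Matrix (Fin 2) (Fin 2) R) :
    (∃ lam : R, K = lam • !![1, 0; 0, r]) ↔ K 0 1 = 0 ∧ K 1 0 = 0 ∧ K 1 1 = r * K 0 0 := by
  constructor
  · rintro ⟨lam, rfl⟩
    simp [mul_comm]
  · rintro ⟨h01, h10, h11⟩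
    refine ⟨K 0 0, ?_⟩
    ext i j
    fin_cases i <;> fin_cases j <;> simp [h01, h10, h11, mul_comm]

theorem Hm_mul_eq_mul_Hm_iff (K : Matrix (Fin 2) (Fin 2) ℂ) :
    Hm * K = K * Hm ↔ K 0 1 = 0 ∧ K 1 0 = 0 := by
  unfold Hm
  rw [← Matrix.ext_iff]
  simp [Fin.forall_fin_two, mul_apply, Fin.sum_univ_two]
  grind

theorem Mpy_mul_eq_mul_Mpy_iff (t u : ℂ) (K : Matrix (Fin 2) (Fin 2) ℂ) :
    Mpy t (-u) * K = K * Mpy t u ↔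
      (t - u) * K 1 0 = 0 ∧ (t + u) * K 1 0 = 0 ∧ (t - u) * K 1 1 = (t + u) * K 0 0 := by
  unfold Mpy
  rw [← Matrix.ext_iff]
  simp [Fin.forall_fin_two, mul_apply, Fin.sum_univ_two]
  grind

theorem Mmy_mul_eq_mul_Mmy_iff (t u : ℂ) (K : Matrix (Fin 2) (Fin 2) ℂ) :
    Mmy t (-u) * K = K * Mmy t u ↔
      (t - u) * K 0 1 = 0 ∧ (t + u) * K 0 1 = 0 ∧ (t - u) * K 1 1 = (t + u) * K 0 0 := by
  unfold Mmy
  rw [← Matrix.ext_iff]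
  simp [Fin.forall_fin_two, mul_apply, Fin.sum_univ_two]
  grind

/-- A 2×2 matrix intertwines the generators of the type-I twisted Yangian of
`Y(sl2)` iff it is a scalar multiple of `diag(1, (t+u)/(t−u))`. -/
theorem stmt9 (u t : ℂ) (htu : t ≠ u) (K : Matrix (Fin 2) (Fin 2) ℂ) :
    (Hm * K = K * Hm ∧ Mpy t (-u) * K = K * Mpy t u ∧
        Mmy t (-u) * K = K * Mmy t u) ↔
      ∃ lam : ℂ, K = lam • !![1, 0; 0, (t + u) / (t - u)] := by
  have htu' : t - u ≠ 0 := sub_ne_zero.mpr htu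
  rw [Hm_mul_eq_mul_Hm_iff, Mpy_mul_eq_mul_Mpy_iff, Mmy_mul_eq_mul_Mmy_iff,
    exists_eq_smul_diag_one_iff, div_mul_eq_mul_div, eq_div_iff htu', mul_comm (K 1 1)]
  constructor
  · rintro ⟨-, ⟨h10, -, h11⟩, h01, -⟩
    exact ⟨(mul_eq_zero.mp h01).resolve_left htu', (mul_eq_zero.mp h10).resolve_left htu', h11⟩
  · rintro ⟨h01, h10, h11⟩
    simp [h01, h10, h11]
end

section
/- Let q, z, c ∈ ℂ with q ≠ 0, q² ≠ 1, z ≠ 0 and c ≠ z. Define the 2×2 matrices D = diag(q, q⁻¹), M⁺(x) = (x − c)·E₂₁ and M⁻(x) = (x⁻¹ − c)·E₁₂. Then a 2×2 complex matrix K satisfies D·K = K·D, M⁺(1/z)·K = K·M⁺(z), and M⁻(1/z)·K = K·M⁻(z) if and only if K is a complex scalar multiple of diag(1, (cz−1)/(z(c−z))). -/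
/-!
Since `q ≠ q⁻¹`, commuting with `D = diag(q, q⁻¹)` forces `K` to be diagonal, say `diag(a, b)`.
For diagonal `K` the `M⁺` and the `M⁻` relation both reduce to the single linear equation
`(z⁻¹ - c) a = (z - c) b`, whose solutions are `b = a (cz - 1)/(z(c - z))`.
-/

open Matrix

/-- `diag(q, q⁻¹)`, the image of the Cartan element `k₂` of `U_q(gl(1|1)hat)`. -/
noncomputable def Dgl (q : ℂ) : Matrix (Fin 2) (Fin 2) ℂ := !![q, 0; 0, q⁻¹]

/-- `M⁺(x) = (x − c)·E₂₁`. -/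
noncomputable def Mpg (c x : ℂ) : Matrix (Fin 2) (Fin 2) ℂ := (x - c) • !![0, 0; 1, 0]

/-- `M⁻(x) = (x⁻¹ − c)·E₁₂`. -/
noncomputable def Mmg (c x : ℂ) : Matrix (Fin 2) (Fin 2) ℂ := (x⁻¹ - c) • !![0, 1; 0, 0]

theorem Matrix.diag_fin_two_mul_comm_iff {R : Type*} [CommRing R] [NoZeroDivisors R] {a b : R}
    (hab : a ≠ b) (K : Matrix (Fin 2) (Fin 2) R) :
    !![a, 0; 0, b] * K = K * !![a, 0; 0, b] ↔ ∃ x y, K = !![x, 0; 0, y] := by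
  have hab' : a - b ≠ 0 := sub_ne_zero.mpr hab
  constructor
  · intro h
    have h01 : a * K 0 1 = K 0 1 * b := by
      simpa [mul_apply, Fin.sum_univ_two] using congrFun₂ h 0 1
    have h10 : b * K 1 0 = K 1 0 * a := by
      simpa [mul_apply, Fin.sum_univ_two] using congrFun₂ h 1 0
    have hK01 : K 0 1 = 0 :=
      (mul_eq_zero.mp (by linear_combination h01 : (a - b) * K 0 1 = 0)).resolve_left hab'
    have hK10 : K 1 0 = 0 :=
      (mul_eq_zero.mp (by linear_combination -h10 : (a - b) * K 1 0 = 0)).resolve_left hab'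
    refine ⟨K 0 0, K 1 1, ?_⟩
    conv_lhs => rw [eta_fin_two K, hK01, hK10]
  · rintro ⟨x, y, rfl⟩
    simp [mul_comm]

theorem Dgl_mul_comm_iff {q : ℂ} (hq : q ≠ 0) (hq2 : q ^ 2 ≠ 1) (K : Matrix (Fin 2) (Fin 2) ℂ) :
    Dgl q * K = K * Dgl q ↔ ∃ x y, K = !![x, 0; 0, y] := by
  refine Matrix.diag_fin_two_mul_comm_iff (fun h => hq2 ?_) K
  simpa [← h, ← sq] using mul_inv_cancel₀ hq

theorem Mpg_mul_diag_eq_iff (c x y a b : ℂ) :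
    Mpg c x * !![a, 0; 0, b] = !![a, 0; 0, b] * Mpg c y ↔ (x - c) * a = (y - c) * b := by
  rw [← ext_iff]
  simp [Mpg, Fin.forall_fin_two, mul_comm]

theorem Mmg_mul_diag_eq_iff (c x y a b : ℂ) :
    Mmg c x * !![a, 0; 0, b] = !![a, 0; 0, b] * Mmg c y ↔ (x⁻¹ - c) * b = (y⁻¹ - c) * a := by
  rw [← ext_iff]
  simp [Mmg, Fin.forall_fin_two, mul_comm]

theorem inv_sub_mul_eq_sub_mul_iff {z c : ℂ} (hz : z ≠ 0) (hc : c ≠ z) (a b : ℂ) :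
    (z⁻¹ - c) * a = (z - c) * b ↔ b = a * ((c * z - 1) / (z * (c - z))) := by
  have hcz : c - z ≠ 0 := sub_ne_zero.mpr hc
  have hzc : z - c ≠ 0 := sub_ne_zero.mpr hc.symm
  constructor <;> intro h
  · field_simp
    field_simp at h
    linear_combination h
  · rw [h]
    field_simp
    ring

/-- A 2×2 matrix intertwines the generators of the singlet-boundary coideal
subalgebra of `U_q(gl(1|1)hat)` iff it is a scalar multiple of
`diag(1, (cz−1)/(z(c−z)))`. -/
theorem stmt15 (q z c : ℂ) (hq : q ≠ 0) (hq2 : q ^ 2 ≠ 1) (hz : z ≠ 0) (hc : c ≠ z)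
    (K : Matrix (Fin 2) (Fin 2) ℂ) :
    (Dgl q * K = K * Dgl q ∧ Mpg c (1 / z) * K = K * Mpg c z ∧
        Mmg c (1 / z) * K = K * Mmg c z) ↔
      ∃ lam : ℂ, K = lam • !![1, 0; 0, (c * z - 1) / (z * (c - z))] := by
  have hscalar (a : ℂ) : a • !![1, 0; 0, (c * z - 1) / (z * (c - z))] =
      !![a, 0; 0, a * ((c * z - 1) / (z * (c - z)))] := by
    simp
  rw [Dgl_mul_comm_iff hq hq2]
  constructor
  · rintro ⟨⟨a, b, rfl⟩, hp, -⟩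
    rw [Mpg_mul_diag_eq_iff, one_div, inv_sub_mul_eq_sub_mul_iff hz hc] at hp
    exact ⟨a, by rw [hscalar, hp]⟩
  · rintro ⟨a, rfl⟩
    rw [hscalar, Mpg_mul_diag_eq_iff, Mmg_mul_diag_eq_iff, one_div, inv_inv]
    have hp := (inv_sub_mul_eq_sub_mul_iff hz hc a _).mpr rfl
    exact ⟨⟨_, _, rfl⟩, hp, hp.symm⟩
end

section
/- Let q ∈ ℂ with q ≠ 0 and q⁴ ≠ 1. A 4×4 complex matrix K commutes with all three matrices diag(q², 1, 1, q⁻²), q·E₁₂ + E₁₃ + E₂₄ − q·E₃₄, and E₂₁ + q⁻¹·E₃₁ + q⁻¹·E₄₂ − E₄₃ if and only if K = a·I₄ + k·(−q⁻¹·E₂₂ + E₂₃ + E₃₂ − q·E₃₃ − (q+q⁻¹)·E₄₄) for some a, k ∈ ℂ. -/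
/-!
`k₂` acts diagonally with eigenvalues `q², 1, 1, q⁻²`, which fall into three distinct classes
because `q⁴ ≠ 1`; so any `K` commuting with it preserves the eigenspaces and is block diagonal
of shape `1 + 2 + 1`. Of the six surviving entries, four are fixed by single entries of the
`ξ₁^±` relations in terms of `K₀₀` and `K₁₂`, which are the two parameters.
-/

open Matrix

namespace GlOneOne

variable {F : Type*} [Field F] {q : F}

/- Images of `Δ(k₂)`, `Δ(ξ₁⁺)`, `Δ(ξ₁⁻)` under `T_z ⊗ T_s`, in the basis
`v₁⊗w₁, v₁⊗w₂, v₂⊗w₁, v₂⊗w₂`. -/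

def k₂Rep (q : F) : Matrix (Fin 4) (Fin 4) F :=
  !![q ^ 2, 0, 0, 0; 0, 1, 0, 0; 0, 0, 1, 0; 0, 0, 0, (q ^ 2)⁻¹]

def ξPlusRep (q : F) : Matrix (Fin 4) (Fin 4) F :=
  !![0, q, 1, 0; 0, 0, 0, 1; 0, 0, 0, -q; 0, 0, 0, 0]

def ξMinusRep (q : F) : Matrix (Fin 4) (Fin 4) F :=
  !![0, 0, 0, 0; 1, 0, 0, 0; q⁻¹, 0, 0, 0; 0, q⁻¹, -1, 0]

def boundaryK (q : F) : Matrix (Fin 4) (Fin 4) F :=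
  !![0, 0, 0, 0; 0, -q⁻¹, 1, 0; 0, 1, -q, 0; 0, 0, 0, -(q + q⁻¹)]

theorem k₂Rep_eq_diagonal (q : F) : k₂Rep q = diagonal ![q ^ 2, 1, 1, (q ^ 2)⁻¹] := by
  ext i j
  fin_cases i <;> fin_cases j <;> rfl

theorem sq_ne_inv_sq (hq : q ≠ 0) (hq4 : q ^ 4 ≠ 1) : q ^ 2 ≠ (q ^ 2)⁻¹ := by
  intro h
  apply hq4
  rw [show q ^ 4 = q ^ 2 * q ^ 2 by ring]
  nth_rw 2 [h]
  exact mul_inv_cancel₀ (pow_ne_zero 2 hq)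

theorem commute_boundaryK_k₂Rep (q : F) : Commute (boundaryK q) (k₂Rep q) := by
  ext i j
  fin_cases i <;> fin_cases j <;> simp [boundaryK, k₂Rep, mul_apply, Fin.sum_univ_four, mul_comm]

theorem commute_boundaryK_ξPlusRep (hq : q ≠ 0) : Commute (boundaryK q) (ξPlusRep q) := by
  ext i j
  fin_cases i <;> fin_cases j <;> simp [boundaryK, ξPlusRep, mul_apply, Fin.sum_univ_four] <;>
    field_simp <;> ring

theorem commute_boundaryK_ξMinusRep (hq : q ≠ 0) : Commute (boundaryK q) (ξMinusRep q) := by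
  ext i j
  fin_cases i <;> fin_cases j <;> simp [boundaryK, ξMinusRep, mul_apply, Fin.sum_univ_four] <;>
    field_simp <;> ring

theorem exists_eq_smul_one_add_smul_boundaryK (hq : q ≠ 0) (hq4 : q ^ 4 ≠ 1)
    {K : Matrix (Fin 4) (Fin 4) F} (hk : Commute K (k₂Rep q)) (hp : Commute K (ξPlusRep q))
    (hm : Commute K (ξMinusRep q)) : ∃ a k : F, K = a • 1 + k • boundaryK q := by
  have hq2 : q ^ 2 ≠ 1 := fun h ↦ hq4 (by rw [show q ^ 4 = (q ^ 2) ^ 2 by ring, h, one_pow])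
  have hq2' := sq_ne_inv_sq hq hq4
  rw [k₂Rep_eq_diagonal] at hk
  have hzero := fun i j ↦ apply_eq_zero_of_commute_diagonal hk (i := i) (j := j)
  have r₁₀ : K 1 1 + K 1 2 * q⁻¹ = K 0 0 := by
    simpa [ξMinusRep, mul_apply, Fin.sum_univ_four] using congr_fun (congr_fun hm 1) 0
  have r₀₁ : K 0 0 * q = q * K 1 1 + K 2 1 := by
    simpa [ξPlusRep, mul_apply, Fin.sum_univ_four] using congr_fun (congr_fun hp 0) 1
  have r₀₂ : K 0 0 = q * K 1 2 + K 2 2 := by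
    simpa [ξPlusRep, mul_apply, Fin.sum_univ_four] using congr_fun (congr_fun hp 0) 2
  have r₁₃ : K 1 1 - K 1 2 * q = K 3 3 := by
    simpa [ξPlusRep, mul_apply, Fin.sum_univ_four, sub_eq_add_neg] using
      congr_fun (congr_fun hp 1) 3
  have h11 : K 1 1 = K 0 0 - q⁻¹ * K 1 2 := by linear_combination r₁₀
  have h21 : K 2 1 = K 1 2 := by
    linear_combination -r₀₁ - q * r₁₀ + K 1 2 * mul_inv_cancel₀ hq
  have h22 : K 2 2 = K 0 0 - q * K 1 2 := by linear_combination -r₀₂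
  have h33 : K 3 3 = K 0 0 - (q + q⁻¹) * K 1 2 := by linear_combination r₁₀ - r₁₃
  refine ⟨K 0 0, K 1 2, ?_⟩
  ext i j
  fin_cases i <;> fin_cases j <;> simp [boundaryK, h11, h21, h22, h33] <;>
    first
    | exact hzero _ _ (by simp [hq2, hq2', hq2.symm, hq2'.symm])
    | ring

theorem commute_k₂Rep_ξPlusRep_ξMinusRep_iff (hq : q ≠ 0) (hq4 : q ^ 4 ≠ 1)
    (K : Matrix (Fin 4) (Fin 4) F) :
    (Commute K (k₂Rep q) ∧ Commute K (ξPlusRep q) ∧ Commute K (ξMinusRep q)) ↔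
      ∃ a k : F, K = a • 1 + k • boundaryK q := by
  refine ⟨fun ⟨hk, hp, hm⟩ ↦ exists_eq_smul_one_add_smul_boundaryK hq hq4 hk hp hm, ?_⟩
  rintro ⟨a, k, rfl⟩
  have commute_of {X : Matrix (Fin 4) (Fin 4) F} (hX : Commute (boundaryK q) X) :
      Commute (a • 1 + k • boundaryK q) X :=
    ((Commute.one_left X).smul_left a).add_left (hX.smul_left k)
  exact ⟨commute_of (commute_boundaryK_k₂Rep q), commute_of (commute_boundaryK_ξPlusRep hq),
    commute_of (commute_boundaryK_ξMinusRep hq)⟩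

end GlOneOne

/-- A 4×4 matrix commutes with the represented coproducts of the generators
`k₂, ξ₁⁺, ξ₁⁻` of `U_q(gl(1|1)hat)` iff it has the stated two-parameter form. -/
theorem stmt16 (q : ℂ) (hq : q ≠ 0) (hq4 : q ^ 4 ≠ 1)
    (K : Matrix (Fin 4) (Fin 4) ℂ) :
    (K * !![q ^ 2, 0, 0, 0; 0, 1, 0, 0; 0, 0, 1, 0; 0, 0, 0, (q ^ 2)⁻¹] =
        !![q ^ 2, 0, 0, 0; 0, 1, 0, 0; 0, 0, 1, 0; 0, 0, 0, (q ^ 2)⁻¹] * K ∧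
      K * !![0, q, 1, 0; 0, 0, 0, 1; 0, 0, 0, -q; 0, 0, 0, 0] =
        !![0, q, 1, 0; 0, 0, 0, 1; 0, 0, 0, -q; 0, 0, 0, 0] * K ∧
      K * !![0, 0, 0, 0; 1, 0, 0, 0; q⁻¹, 0, 0, 0; 0, q⁻¹, -1, 0] =
        !![0, 0, 0, 0; 1, 0, 0, 0; q⁻¹, 0, 0, 0; 0, q⁻¹, -1, 0] * K) ↔
      ∃ a k : ℂ, K = a • (1 : Matrix (Fin 4) (Fin 4) ℂ) +
        k • !![0, 0, 0, 0; 0, -q⁻¹, 1, 0; 0, 1, -q, 0; 0, 0, 0, -(q + q⁻¹)] :=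
  GlOneOne.commute_k₂Rep_ξPlusRep_ξMinusRep_iff hq hq4 K
end

section
/- Let q, z, s ∈ ℂ with q ≠ 0, q² ≠ 1, z ≠ 0, s ≠ 0, and D := q⁻² − (s + s⁻¹)z + q²z² ≠ 0. Define the 4×4 matrix M(x) = a(x)·(E₁₂ − E₃₄) + b(x)·(E₁₃ + E₂₄) with a(x) = (q⁻² − 1)x − s − s⁻¹ and b(x) = −(q·x⁻¹ + q⁻¹·x). Then for k ∈ ℂ the matrix K = I₄ + k·(−q⁻¹·E₂₂ + E₂₃ + E₃₂ − q·E₃₃ − (q+q⁻¹)·E₄₄) satisfies M(1/z)·K = K·M(z) if and only if k = (q − q⁻¹)(z² − 1)/D. -/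
open Matrix

/-- The represented coproduct of the twisted affine generator `B₀⁻` of the
vector-boundary coideal subalgebra of `U_q(gl(1|1)hat)`:
`M(x) = a(x)·(E₁₂ − E₃₄) + b(x)·(E₁₃ + E₂₄)`. -/
noncomputable def Mtg (q s x : ℂ) : Matrix (Fin 4) (Fin 4) ℂ :=
  !![0, ((q ^ 2)⁻¹ - 1) * x - s - s⁻¹, -(q * x⁻¹ + q⁻¹ * x), 0;
     0, 0, 0, -(q * x⁻¹ + q⁻¹ * x);
     0, 0, 0, -(((q ^ 2)⁻¹ - 1) * x - s - s⁻¹);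
     0, 0, 0, 0]

/-!
Writing `K = 1 + k • N`, every entry of `M(1/z) K − K M(z)` is a multiple of the single scalar
`(k D − (q − q⁻¹)(z² − 1)) / z`: the defect equals this scalar times the fixed nonzero matrix
`−q⁻¹E₁₂ + E₁₃ + E₂₄ + q⁻¹E₃₄`. Hence `K` intertwines exactly when `k D = (q − q⁻¹)(z² − 1)`.
-/

noncomputable def kMatrixDirection (q : ℂ) : Matrix (Fin 4) (Fin 4) ℂ :=
  !![0, 0, 0, 0; 0, -q⁻¹, 1, 0; 0, 1, -q, 0; 0, 0, 0, -(q + q⁻¹)]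

noncomputable def intertwiningDefect (q : ℂ) : Matrix (Fin 4) (Fin 4) ℂ :=
  !![0, -q⁻¹, 1, 0; 0, 0, 0, 1; 0, 0, 0, q⁻¹; 0, 0, 0, 0]

lemma intertwiningDefect_ne_zero (q : ℂ) : intertwiningDefect q ≠ 0 := fun h => by
  simpa [intertwiningDefect] using congr_fun (congr_fun h 0) 2

lemma Mtg_inv_mul_sub_mul_Mtg {q z : ℂ} (hq : q ≠ 0) (hz : z ≠ 0) (s k : ℂ) :
    Mtg q s z⁻¹ * (1 + k • kMatrixDirection q) - (1 + k • kMatrixDirection q) * Mtg q s z =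
      ((k * ((q ^ 2)⁻¹ - (s + s⁻¹) * z + q ^ 2 * z ^ 2) - (q - q⁻¹) * (z ^ 2 - 1)) / z) •
        intertwiningDefect q := by
  ext i j
  simp only [Matrix.sub_apply, Matrix.mul_apply, Fin.sum_univ_four, Matrix.smul_apply]
  -- `s` may vanish, so `s⁻¹` is treated as an independent variable that `field_simp` leaves alone.
  fin_cases i <;> fin_cases j <;>
    simp [Mtg, kMatrixDirection, intertwiningDefect] <;>
    generalize s⁻¹ = t <;>
    field_simp <;> ring

theorem stmt17_general (q z s k : ℂ) (hq : q ≠ 0) (hz : z ≠ 0)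
    (hD : (q ^ 2)⁻¹ - (s + s⁻¹) * z + q ^ 2 * z ^ 2 ≠ 0) :
    Mtg q s (1 / z) *
        (1 + k • !![0, 0, 0, 0; 0, -q⁻¹, 1, 0; 0, 1, -q, 0; 0, 0, 0, -(q + q⁻¹)]) =
      (1 + k • !![0, 0, 0, 0; 0, -q⁻¹, 1, 0; 0, 1, -q, 0; 0, 0, 0, -(q + q⁻¹)]) *
        Mtg q s z ↔
      k = (q - q⁻¹) * (z ^ 2 - 1) /
        ((q ^ 2)⁻¹ - (s + s⁻¹) * z + q ^ 2 * z ^ 2) := by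
  change Mtg q s (1 / z) * (1 + k • kMatrixDirection q) =
    (1 + k • kMatrixDirection q) * Mtg q s z ↔ _
  rw [one_div, ← sub_eq_zero, Mtg_inv_mul_sub_mul_Mtg hq hz, smul_eq_zero,
    or_iff_left (intertwiningDefect_ne_zero q), div_eq_zero_iff, or_iff_left hz, sub_eq_zero,
    eq_div_iff hD]

/-- The K-matrix `I₄ + k·(−q⁻¹E₂₂ + E₂₃ + E₃₂ − qE₃₃ − (q+q⁻¹)E₄₄)` intertwines
the twisted affine generator iff `k = (q−q⁻¹)(z²−1)/D`. -/
theorem stmt17 (q z s k : ℂ) (hq : q ≠ 0) (hq2 : q ^ 2 ≠ 1) (hz : z ≠ 0) (hs : s ≠ 0)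
    (hD : (q ^ 2)⁻¹ - (s + s⁻¹) * z + q ^ 2 * z ^ 2 ≠ 0) :
    Mtg q s (1 / z) *
        (1 + k • !![0, 0, 0, 0; 0, -q⁻¹, 1, 0; 0, 1, -q, 0; 0, 0, 0, -(q + q⁻¹)]) =
      (1 + k • !![0, 0, 0, 0; 0, -q⁻¹, 1, 0; 0, 1, -q, 0; 0, 0, 0, -(q + q⁻¹)]) *
        Mtg q s z ↔
      k = (q - q⁻¹) * (z ^ 2 - 1) /
        ((q ^ 2)⁻¹ - (s + s⁻¹) * z + q ^ 2 * z ^ 2) :=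
  stmt17_general q z s k hq hz hD
end
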